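/- Let τ = (τ_1, ..., τ_{k+1}) ∈ (0,∞)^{k+1} be k-good, i.e., it satisfies the strict (k+1)-gon inequalities and |Σ_{j=1}^{k+1} ε_j τ_j| > 0 for every sign vector ε ∈ {±1}^{k+1}. Then τ is a regular value of F(ξ_1,...,ξ_k) = (|ξ_1|,...,|ξ_k|, |ξ_1+...+ξ_k|): at every point ξ ∈ F^{-1}(τ), the differential dF_ξ is surjective onto ℝ^{k+1}. -/

import Mathlib

open Finset
open scoped RealInnerProductSpace

theorem stmt4 (k n : ℕ) (hk : 1 ≤ k) (hn : 2 ≤ n)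
    (τ : Fin (k+1) → ℝ) (hτ : ∀ j, 0 < τ j)
    (hpoly : ∀ j, τ j < ∑ ℓ ∈ univ.erase j, τ ℓ)
    (hnondeg : ∀ ε : Fin (k+1) → ℝ, (∀ j, ε j = 1 ∨ ε j = -1) →
      ∑ j, ε j * τ j ≠ 0) :
    ∀ ξ : Fin k → EuclideanSpace ℝ (Fin n),
      (∀ j : Fin k, ‖ξ j‖ = τ j.castSucc) → ‖∑ j, ξ j‖ = τ (Fin.last k) →
      Function.Surjective (fun h : Fin k → EuclideanSpace ℝ (Fin n) =>
        (Fin.snoc (fun j => ⟪‖ξ j‖⁻¹ • ξ j, h j⟫)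
          ⟪‖∑ j, ξ j‖⁻¹ • (∑ j, ξ j), ∑ j, h j⟫ : Fin (k+1) → ℝ)) := by
  intro ξ hξ hS
  set S : EuclideanSpace ℝ (Fin n) := ∑ j, ξ j with hSdef
  have hSpos : 0 < ‖S‖ := hS ▸ hτ _
  set v : EuclideanSpace ℝ (Fin n) := ‖S‖⁻¹ • S with hv
  have hvnorm : ‖v‖ = 1 := by
    rw [hv, norm_smul, norm_inv, norm_norm, inv_mul_cancel₀ hSpos.ne']
  have hSv : S = τ (Fin.last k) • v := by
    rw [hv, smul_smul, ← hS, mul_inv_cancel₀ hSpos.ne', one_smul]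
  have hξpos : ∀ j, 0 < ‖ξ j‖ := fun j => (hξ j) ▸ hτ _
  set u : Fin k → EuclideanSpace ℝ (Fin n) := fun j => ‖ξ j‖⁻¹ • ξ j with hu
  have hunorm : ∀ j, ‖u j‖ = 1 := by
    intro j
    rw [hu]
    simp only []
    rw [norm_smul, norm_inv, norm_norm, inv_mul_cancel₀ (hξpos j).ne']
  have huu : ∀ j, ⟪u j, u j⟫ = 1 := by
    intro j
    rw [real_inner_self_eq_norm_sq, hunorm, one_pow]
  have hξu : ∀ j, ξ j = ‖ξ j‖ • u j := by
    intro j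
    rw [hu]
    simp only []
    rw [smul_inv_smul₀ (hξpos j).ne']
  have huξ : ∀ j, ⟪u j, ξ j⟫ = ‖ξ j‖ := by
    intro j
    show ⟪‖ξ j‖⁻¹ • ξ j, ξ j⟫ = ‖ξ j‖
    rw [real_inner_smul_left, real_inner_self_eq_norm_sq, sq,
      inv_mul_cancel_left₀ (hξpos j).ne']
  have hgu : ∀ (j : Fin k) (x : EuclideanSpace ℝ (Fin n)),
      (⟪‖ξ j‖⁻¹ • ξ j, x⟫ : ℝ) = ⟪u j, x⟫ := fun _ _ => rfl
  clear_value u v S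
  by_cases hall : ∀ j, ξ j = ⟪v, ξ j⟫ • v
  · exfalso
    set r : Fin k → ℝ := fun j => ⟪v, ξ j⟫ with hr
    have habs : ∀ j, |r j| = τ j.castSucc := by
      intro j
      have h1 := congrArg norm (hall j)
      rw [norm_smul, hvnorm, mul_one, hξ j, Real.norm_eq_abs] at h1
      exact h1.symm
    have hSsum : S = (∑ j, r j) • v := by
      rw [hSdef, Finset.sum_smul]
      exact Finset.sum_congr rfl (fun j _ => hall j)
    have hv0 : v ≠ 0 := by
      intro h; rw [h, norm_zero] at hvnorm; norm_num at hvnorm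
    have hsum : ∑ j, r j = τ (Fin.last k) := by
      have := hSsum.symm.trans hSv
      exact smul_left_injective ℝ hv0 this
    set ε : Fin (k+1) → ℝ := Fin.lastCases (-1) (fun j => r j / τ j.castSucc) with hε
    apply hnondeg ε
    · intro j
      induction j using Fin.lastCases with
      | last => right; simp [hε]
      | cast j =>
        have := habs j
        rcases abs_eq (le_of_lt (hτ j.castSucc)) |>.mp this with h | h
        · left; simp [hε, h, div_self (hτ j.castSucc).ne']
        · right; simp [hε, h, neg_div, div_self (hτ j.castSucc).ne']
    · rw [Fin.sum_univ_castSucc]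
      have h1 : ∀ j : Fin k, ε j.castSucc * τ j.castSucc = r j := by
        intro j
        rw [hε]
        simp only [Fin.lastCases_castSucc]
        exact div_mul_cancel₀ _ (hτ j.castSucc).ne'
      rw [Finset.sum_congr rfl (fun j _ => h1 j)]
      simp [hε, hsum]
  · push_neg at hall
    obtain ⟨j0, hj0⟩ := hall
    set c0 : ℝ := ⟪u j0, v⟫ with hc0
    set w : EuclideanSpace ℝ (Fin n) := v - c0 • u j0 with hw
    have hw0 : w ≠ 0 := by
      intro h
      apply hj0
      have hveq : v = c0 • u j0 := sub_eq_zero.mp h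
      have hc2 : c0 ^ 2 = 1 := by
        have h1 := congrArg norm hveq
        rw [hvnorm, norm_smul, hunorm, mul_one, Real.norm_eq_abs] at h1
        nlinarith [abs_nonneg c0, sq_abs c0]
      have hinner : ⟪v, ξ j0⟫ = c0 * ‖ξ j0‖ := by
        rw [hveq, real_inner_smul_left, huξ j0]
      rw [hinner, hveq, smul_smul]
      have h2 : c0 * ‖ξ j0‖ * c0 = ‖ξ j0‖ := by
        have : c0 * ‖ξ j0‖ * c0 = c0 ^ 2 * ‖ξ j0‖ := by ring
        rw [this, hc2, one_mul]
      rw [h2, ← hξu j0]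
    have hwu : ⟪u j0, w⟫ = 0 := by
      rw [hw, inner_sub_right, real_inner_smul_right, huu j0, ← hc0]
      ring
    have hvw : ⟪v, w⟫ = ‖w‖ ^ 2 := by
      have hveq : v = w + c0 • u j0 := by rw [hw]; abel
      nth_rewrite 1 [hveq]
      rw [inner_add_left, real_inner_smul_left, hwu,
        real_inner_self_eq_norm_sq]
      ring
    have hvwpos : 0 < ⟪v, w⟫ := by
      rw [hvw]
      exact pow_pos (norm_pos_iff.mpr hw0) 2
    intro c
    set t : ℝ := (c (Fin.last k) - ∑ j, c j.castSucc * ⟪v, u j⟫) / ⟪v, w⟫ with ht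
    refine ⟨fun j => c j.castSucc • u j + (if j = j0 then t • w else 0), ?_⟩
    funext i
    induction i using Fin.lastCases with
    | last =>
      simp only [Fin.snoc_last]
      rw [inner_sum]
      have h1 : ∀ j : Fin k,
          ⟪v, c j.castSucc • u j + (if j = j0 then t • w else 0)⟫
          = c j.castSucc * ⟪v, u j⟫ + (if j = j0 then t * ⟪v, w⟫ else 0) := by
        intro j
        rw [inner_add_right, real_inner_smul_right]
        congr 1
        split
        · rw [real_inner_smul_right]
        · rw [inner_zero_right]
      rw [Finset.sum_congr rfl (fun j _ => h1 j), Finset.sum_add_distrib,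
        Finset.sum_ite_eq' univ j0, if_pos (Finset.mem_univ j0)]
      rw [ht, div_mul_cancel₀ _ hvwpos.ne']
      ring
    | cast i =>
      simp only [Fin.snoc_castSucc]
      rw [hgu, inner_add_right, real_inner_smul_right, huu i, mul_one]
      split
      · rename_i hi
        subst hi
        rw [real_inner_smul_right, hwu]
        ring
      · rw [inner_zero_right, add_zero]
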